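/- Power rule: for the N-step system with potential g(u_0,...,u_{N−1}) = Σ_{i<N} f(u_i) (where the strongly spanning sets for the N-step system are required to keep the state in int Q at all intermediate times), the inner invariance pressure satisfies P_int^N(g,Q) = N · P_int(f,Q). -/

import Mathlib

/-!
Blocking controls in groups of `N` is a bijection under which the `N`-step spanning sets of time
`n` are exactly the strongly `(nN, Q)`-spanning sets of the original system, with the same
weights; so the `N`-step quantity at time `n` is `a_{nN}(f, Q)`. Concatenating spanning sets makes
`n ↦ a_n(f, Q)` submultiplicative, and it is finite because `Q` is compact and strongly invariant.
By Fekete's lemma `(1/n) log a_n(f, Q)` therefore converges in the extended reals (possibly to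
`⊥`), and along the subsequence `nN` the normalised limit is `N · P_int(f, Q)`.
-/

open Filter Topology
open scoped ENNReal

noncomputable section

/-- Solution map of the discrete-time control system `x_{k+1} = F(x_k, u_k)`. -/
def phi {X U : Type*} (F : X → U → X) : ℕ → X → (ℕ → U) → X
  | 0, x, _ => x
  | k + 1, x, ω => F (phi F k x ω) (ω k)

/-- Birkhoff-type sum of `f` along the first `n` control values. -/
def Snf {U : Type*} (f : U → ℝ) (n : ℕ) (ω : ℕ → U) : ℝ :=
  ∑ i ∈ Finset.range n, f (ω i)

/-- `S` is a strongly `(n,Q)`-spanning set of control sequences. -/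
def IsSpanningSet {X U : Type*} [TopologicalSpace X] (F : X → U → X) (Q : Set X) (n : ℕ)
    (S : Set (ℕ → U)) : Prop :=
  ∀ x ∈ Q, ∃ ω ∈ S, ∀ i, 1 ≤ i → i ≤ n → phi F i x ω ∈ interior Q

/-- `Q` is strongly invariant: every point of `Q` can be steered into the interior of `Q`. -/
def StronglyInvariant {X U : Type*} [TopologicalSpace X] (F : X → U → X) (Q : Set X) : Prop :=
  ∀ x ∈ Q, ∃ u, F x u ∈ interior Q

/-- `a_n(f,Q)`: infimum over strongly `(n,Q)`-spanning (finite) sets `S` of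
`∑_{ω ∈ S} exp ((S_n f)(ω))`. -/
def aInv {X U : Type*} [TopologicalSpace X] (F : X → U → X) (f : U → ℝ) (Q : Set X) (n : ℕ) :
    ℝ≥0∞ :=
  ⨅ (S : Finset (ℕ → U)) (_ : IsSpanningSet F Q n ↑S),
    ∑ ω ∈ S, ENNReal.ofReal (Real.exp (Snf f n ω))

/-- The inner invariance pressure `P_int(f,Q) = lim (1/n) log a_n(f,Q)` (as a limsup, with
values in the extended reals). -/
def Pinv {X U : Type*} [TopologicalSpace X] (F : X → U → X) (f : U → ℝ) (Q : Set X) : EReal :=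
  Filter.atTop.limsup fun n : ℕ => (((n : ℝ)⁻¹ : ℝ) : EReal) * ENNReal.log (aInv F f Q n)

section Trajectories

variable {X U : Type*} (F : X → U → X)

lemma phi_congr {k : ℕ} {x : X} {ω ω' : ℕ → U} (h : ∀ j < k, ω j = ω' j) :
    phi F k x ω = phi F k x ω' := by
  induction k with
  | zero => rfl
  | succ k ih => simp only [phi, ih fun j hj => h j (by omega), h k k.lt_succ_self]

lemma phi_add (m k : ℕ) (x : X) (ω : ℕ → U) :
    phi F (m + k) x ω = phi F k (phi F m x ω) (fun i => ω (m + i)) := by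
  induction k with
  | zero => rfl
  | succ k ih =>
    rw [← Nat.add_assoc]
    exact congrArg₂ F ih rfl

lemma continuous_phi [TopologicalSpace X] (hF : ∀ u, Continuous fun x => F x u) (k : ℕ)
    (ω : ℕ → U) : Continuous fun x => phi F k x ω := by
  induction k with
  | zero => exact continuous_id
  | succ k ih => exact (hF (ω k)).comp ih

def splice (m : ℕ) (ω τ : ℕ → U) : ℕ → U := fun j => if j < m then ω j else τ (j - m)

lemma splice_of_lt {m j : ℕ} {ω τ : ℕ → U} (h : j < m) : splice m ω τ j = ω j := if_pos h

lemma splice_add (m : ℕ) (ω τ : ℕ → U) : (fun i => splice m ω τ (m + i)) = τ := by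
  funext i
  simp [splice]

lemma phi_splice_of_le {m j : ℕ} (x : X) (ω τ : ℕ → U) (hj : j ≤ m) :
    phi F j x (splice m ω τ) = phi F j x ω :=
  phi_congr F fun _ hl => splice_of_lt (by omega)

lemma phi_splice_add (m j : ℕ) (x : X) (ω τ : ℕ → U) :
    phi F (m + j) x (splice m ω τ) = phi F j (phi F m x ω) τ := by
  rw [phi_add, phi_splice_of_le F x ω τ le_rfl, splice_add]

end Trajectories

section Spanning

variable {X U : Type*} [TopologicalSpace X] (F : X → U → X) {Q : Set X}

-- `IsSpanningSet F Q n S` unfolds to `∀ x ∈ Q, ∃ ω ∈ S, StaysInInterior F Q n x ω`.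
def StaysInInterior (Q : Set X) (n : ℕ) (x : X) (ω : ℕ → U) : Prop :=
  ∀ i, 1 ≤ i → i ≤ n → phi F i x ω ∈ interior Q

variable {F}

lemma StaysInInterior.phi_mem {n : ℕ} {x : X} {ω : ℕ → U} (h : StaysInInterior F Q n x ω)
    (hx : x ∈ Q) : phi F n x ω ∈ Q := by
  rcases n.eq_zero_or_pos with rfl | hn
  · exact hx
  · exact interior_subset (h n hn le_rfl)

lemma StaysInInterior.splice {m n : ℕ} {x : X} {ω τ : ℕ → U} (hω : StaysInInterior F Q m x ω)
    (hτ : StaysInInterior F Q n (phi F m x ω) τ) :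
    StaysInInterior F Q (m + n) x (splice m ω τ) := by
  intro i h1 h2
  rcases le_or_gt i m with hi | hi
  · rw [phi_splice_of_le F x ω τ hi]
    exact hω i h1 hi
  · obtain ⟨j, rfl⟩ : ∃ j, i = m + j := ⟨i - m, by omega⟩
    rw [phi_splice_add]
    exact hτ j (by omega) (by omega)

lemma StaysInInterior.eventually (hF : ∀ u, Continuous fun x => F x u) {n : ℕ} {x : X}
    {ω : ℕ → U} (h : StaysInInterior F Q n x ω) :
    ∀ᶠ y in 𝓝 x, StaysInInterior F Q n y ω := by
  have hnear : ∀ i ∈ Finset.Icc 1 n, ∀ᶠ y in 𝓝 x, phi F i y ω ∈ interior Q := fun i hi =>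
    (continuous_phi F hF i ω).continuousAt.preimage_mem_nhds
      (isOpen_interior.mem_nhds (h i (Finset.mem_Icc.1 hi).1 (Finset.mem_Icc.1 hi).2))
  filter_upwards [(Filter.eventually_all_finset _).2 hnear] with y hy i h1 h2
  exact hy i (Finset.mem_Icc.2 ⟨h1, h2⟩)

lemma exists_staysInInterior (hinv : StronglyInvariant F Q) (n : ℕ) {x : X} (hx : x ∈ Q) :
    ∃ ω : ℕ → U, StaysInInterior F Q n x ω := by
  induction n with
  | zero =>
    obtain ⟨u, -⟩ := hinv x hx
    exact ⟨fun _ => u, fun i h1 h2 => by omega⟩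
  | succ n ih =>
    obtain ⟨ω, hω⟩ := ih
    obtain ⟨u, hu⟩ := hinv _ (hω.phi_mem hx)
    refine ⟨splice n ω fun _ => u, hω.splice fun i h1 h2 => ?_⟩
    obtain rfl : i = 1 := by omega
    exact hu

lemma exists_finset_isSpanningSet (hF : ∀ u, Continuous fun x => F x u) (hQ : IsCompact Q)
    (hinv : StronglyInvariant F Q) (n : ℕ) : ∃ S : Finset (ℕ → U), IsSpanningSet F Q n ↑S := by
  classical
  choose ω hω using fun x (hx : x ∈ Q) => exists_staysInInterior hinv n hx
  obtain ⟨t, hcover⟩ := hQ.elim_nhds_subcover' (fun x hx => {y | StaysInInterior F Q n y (ω x hx)})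
    fun x hx => (hω x hx).eventually hF
  refine ⟨t.image fun y : Q => ω y.1 y.2, fun x hx => ?_⟩
  obtain ⟨y, hyt, hxy⟩ := Set.mem_iUnion₂.1 (hcover hx)
  exact ⟨_, Finset.mem_image_of_mem _ hyt, hxy⟩

end Spanning

section Submultiplicative

variable {X U : Type*} [TopologicalSpace X] (F : X → U → X) (f : U → ℝ) {Q : Set X}

lemma Snf_add (m n : ℕ) (ω : ℕ → U) :
    Snf f (m + n) ω = Snf f m ω + Snf f n (fun i => ω (m + i)) :=
  Finset.sum_range_add _ _ _

lemma Snf_splice (m n : ℕ) (ω τ : ℕ → U) :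
    Snf f (m + n) (splice m ω τ) = Snf f m ω + Snf f n τ := by
  rw [Snf_add, splice_add]
  congr 1
  exact Finset.sum_congr rfl fun j hj => congrArg f (splice_of_lt (Finset.mem_range.1 hj))

lemma aInv_le_sum {n : ℕ} {S : Finset (ℕ → U)} (hS : IsSpanningSet F Q n ↑S) :
    aInv F f Q n ≤ ∑ ω ∈ S, ENNReal.ofReal (Real.exp (Snf f n ω)) :=
  iInf₂_le S hS

lemma aInv_add_le_sum_mul_sum {m n : ℕ} {S T : Finset (ℕ → U)}
    (hS : IsSpanningSet F Q m ↑S) (hT : IsSpanningSet F Q n ↑T) :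
    aInv F f Q (m + n) ≤ (∑ ω ∈ S, ENNReal.ofReal (Real.exp (Snf f m ω))) *
      ∑ τ ∈ T, ENNReal.ofReal (Real.exp (Snf f n τ)) := by
  classical
  have hspan : IsSpanningSet F Q (m + n) ↑((S ×ˢ T).image fun p => splice m p.1 p.2) := by
    intro x hx
    obtain ⟨ω, hωS, hω⟩ := hS x hx
    obtain ⟨τ, hτT, hτ⟩ := hT _ (StaysInInterior.phi_mem hω hx)
    exact ⟨splice m ω τ, Finset.mem_image.2 ⟨(ω, τ), Finset.mem_product.2 ⟨hωS, hτT⟩, rfl⟩,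
      StaysInInterior.splice hω hτ⟩
  calc aInv F f Q (m + n) ≤ _ := aInv_le_sum F f hspan
    _ ≤ ∑ p ∈ S ×ˢ T, ENNReal.ofReal (Real.exp (Snf f (m + n) (splice m p.1 p.2))) :=
      Finset.sum_image_le_of_nonneg fun _ _ => bot_le
    _ = _ := by
      rw [Finset.sum_mul_sum, ← Finset.sum_product']
      refine Finset.sum_congr rfl fun p _ => ?_
      rw [Snf_splice, Real.exp_add, ENNReal.ofReal_mul (Real.exp_pos _).le]

lemma aInv_eq_iInf_subtype (n : ℕ) :
    aInv F f Q n = ⨅ S : {S : Finset (ℕ → U) // IsSpanningSet F Q n ↑S},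
      ∑ ω ∈ S.1, ENNReal.ofReal (Real.exp (Snf f n ω)) :=
  iInf_subtype'

variable {F}

lemma aInv_ne_top (hF : ∀ u, Continuous fun x => F x u) (hQ : IsCompact Q)
    (hinv : StronglyInvariant F Q) (n : ℕ) : aInv F f Q n ≠ ⊤ := by
  obtain ⟨S, hS⟩ := exists_finset_isSpanningSet hF hQ hinv n
  exact ne_top_of_le_ne_top (by simp) (aInv_le_sum F f hS)

lemma aInv_add_le_mul (hF : ∀ u, Continuous fun x => F x u) (hQ : IsCompact Q)
    (hinv : StronglyInvariant F Q) (m n : ℕ) :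
    aInv F f Q (m + n) ≤ aInv F f Q m * aInv F f Q n := by
  obtain ⟨S, hS⟩ := exists_finset_isSpanningSet hF hQ hinv m
  obtain ⟨T, hT⟩ := exists_finset_isSpanningSet hF hQ hinv n
  rw [aInv_eq_iInf_subtype F f m, aInv_eq_iInf_subtype F f n]
  exact ENNReal.le_iInf_mul_iInf ⟨⟨S, hS⟩, by simp⟩ ⟨⟨T, hT⟩, by simp⟩
    fun S T => aInv_add_le_sum_mul_sum F f S.2 T.2

end Submultiplicative

lemma Subadditive.exists_tendsto_ereal {u : ℕ → ℝ} (h : Subadditive u) :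
    ∃ c : EReal, Tendsto (fun n : ℕ => ((u n / n : ℝ) : EReal)) atTop (𝓝 c) := by
  by_cases hbdd : BddBelow (Set.range fun n : ℕ => u n / n)
  · exact ⟨h.lim, EReal.tendsto_coe.2 (h.tendsto_lim hbdd)⟩
  refine ⟨⊥, EReal.tendsto_nhds_bot_iff_real.2 fun L => ?_⟩
  obtain ⟨_, ⟨n, rfl⟩, hn⟩ := not_bddBelow_iff.1 hbdd (min L 0)
  have hn0 : n ≠ 0 := by
    rintro rfl
    simp at hn
  filter_upwards [h.eventually_div_lt_of_div_lt hn0 (hn.trans_le (min_le_left L 0))] with p hp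
  exact EReal.coe_lt_coe_iff.2 hp

lemma ENNReal.exists_tendsto_inv_mul_log_of_submultiplicative {a : ℕ → ℝ≥0∞}
    (ha : ∀ n, a n ≠ ⊤) (hmul : ∀ m n, a (m + n) ≤ a m * a n) :
    ∃ c : EReal, Tendsto (fun n : ℕ => (((n : ℝ)⁻¹ : ℝ) : EReal) * ENNReal.log (a n)) atTop
      (𝓝 c) := by
  by_cases hzero : ∃ k, a k = 0
  · obtain ⟨k, hk⟩ := hzero
    refine ⟨⊥, tendsto_const_nhds.congr' ?_⟩
    filter_upwards [eventually_ge_atTop (k + 1)] with n hn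
    have han : a n = 0 := by
      obtain ⟨j, rfl⟩ : ∃ j, n = j + k := ⟨n - k, by omega⟩
      simpa [hk] using hmul j k
    have hn_pos : (0 : ℝ) < n := by exact_mod_cast (show 0 < n by omega)
    rw [han, ENNReal.log_zero, EReal.mul_bot_of_pos (EReal.coe_pos.2 (inv_pos.2 hn_pos))]
  push Not at hzero
  have hpos : ∀ n, 0 < (a n).toReal := fun n => ENNReal.toReal_pos (hzero n) (ha n)
  set u : ℕ → ℝ := fun n => Real.log (a n).toReal
  have hsub : Subadditive u := fun m n => by
    simp only [u]
    rw [← Real.log_mul (hpos m).ne' (hpos n).ne', ← ENNReal.toReal_mul]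
    exact Real.log_le_log (hpos _) (ENNReal.toReal_mono (ENNReal.mul_ne_top (ha m) (ha n))
      (hmul m n))
  obtain ⟨c, hc⟩ := hsub.exists_tendsto_ereal
  refine ⟨c, hc.congr fun n => ?_⟩
  rw [ENNReal.log_pos_real (hzero n) (ha n), ← EReal.coe_mul, div_eq_inv_mul]

lemma EReal.tendsto_inv_mul_comp_mul {b : ℕ → EReal} {c : EReal}
    (h : Tendsto (fun n : ℕ => (((n : ℝ)⁻¹ : ℝ) : EReal) * b n) atTop (𝓝 c)) {N : ℕ}
    (hN : 0 < N) :
    Tendsto (fun n : ℕ => (((n : ℝ)⁻¹ : ℝ) : EReal) * b (n * N)) atTop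
      (𝓝 (((N : ℝ) : EReal) * c)) := by
  have hsub := EReal.Tendsto.const_mul (a := ((N : ℝ) : EReal))
    (h.comp (strictMono_mul_right_of_pos hN).tendsto_atTop)
    (Or.inl (EReal.coe_ne_bot _)) (Or.inl (EReal.coe_ne_top _))
  refine hsub.congr' ?_
  filter_upwards [eventually_ge_atTop 1] with n hn
  have hn' : (n : ℝ) ≠ 0 := by positivity
  have hN' : (N : ℝ) ≠ 0 := by positivity
  simp only [Function.comp_apply, ← mul_assoc, ← EReal.coe_mul]
  congr 2
  push_cast
  field_simp

section Blocks

variable {U : Type*} {N : ℕ}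

def blockEquiv (hN : 0 < N) : (ℕ → Fin N → U) ≃ (ℕ → U) where
  toFun η j := η (j / N) ⟨j % N, Nat.mod_lt j hN⟩
  invFun ω k i := ω (k * N + i)
  left_inv η := by
    funext k i
    simp only [Nat.mul_comm k N, Nat.mul_add_div hN, Nat.mul_add_mod, Nat.div_eq_of_lt i.isLt,
      Nat.mod_eq_of_lt i.isLt, Nat.add_zero]
  right_inv ω := by
    funext j
    exact congrArg ω (Nat.div_add_mod' j N)

lemma blockEquiv_apply_mul_add (hN : 0 < N) (η : ℕ → Fin N → U) (k : ℕ) (i : Fin N) :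
    blockEquiv hN η (k * N + i) = η k i :=
  congrFun (congrFun ((blockEquiv hN).left_inv η) k) i

lemma Snf_blockEquiv (f : U → ℝ) (hN : 0 < N) (η : ℕ → Fin N → U) (n : ℕ) :
    Snf f (n * N) (blockEquiv hN η) = ∑ k ∈ Finset.range n, ∑ i : Fin N, f (η k i) := by
  induction n with
  | zero => simp [Snf]
  | succ n ih =>
    rw [Nat.succ_mul, Snf_add, ih, Finset.sum_range_succ, Snf]
    congr 1
    rw [← Fin.sum_univ_eq_sum_range fun i => f (blockEquiv hN η (n * N + i))]
    simp only [blockEquiv_apply_mul_add]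

lemma iInf_blocks_eq_aInv {X : Type*} [TopologicalSpace X] (F : X → U → X) (f : U → ℝ)
    (Q : Set X) (hN : 0 < N) (n : ℕ) :
    (⨅ (S : Finset (ℕ → Fin N → U))
      (_ : ∀ x ∈ Q, ∃ η ∈ S, ∀ i, 1 ≤ i → i ≤ n * N →
        phi F i x (fun j : ℕ => η (j / N) ⟨j % N, Nat.mod_lt j hN⟩) ∈ interior Q),
      ∑ η ∈ S, ENNReal.ofReal (Real.exp (∑ k ∈ Finset.range n, ∑ i : Fin N, f (η k i))) : ℝ≥0∞)
    = aInv F f Q (n * N) := by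
  rw [aInv]
  refine (blockEquiv hN).finsetCongr.iInf_congr fun S => iInf_congr_Prop ?_ fun _ => ?_
  · simp [IsSpanningSet, blockEquiv]
  · simp [Equiv.finsetCongr_apply, Finset.sum_map, Snf_blockEquiv]

end Blocks

/-- Power rule: for the `N`-step system with potential `g(u_0,…,u_{N−1}) = Σ_{i<N} f(u_i)`
(where spanning sets are required to keep the state in `int Q` at all intermediate times),
the inner invariance pressure satisfies `P_int^N(g,Q) = N · P_int(f,Q)`. -/
theorem pressure_power_rule {X U : Type*} [MetricSpace X]
    (F : X → U → X) (hF : ∀ u, Continuous fun x => F x u)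
    (Q : Set X) (hQ : IsCompact Q) (hinv : StronglyInvariant F Q)
    (f : U → ℝ) (N : ℕ) (hN : 0 < N) :
    Filter.atTop.limsup (fun n : ℕ =>
        (((n : ℝ)⁻¹ : ℝ) : EReal) * ENNReal.log (
          ⨅ (S : Finset (ℕ → Fin N → U))
            (_ : ∀ x ∈ Q, ∃ η ∈ S, ∀ i, 1 ≤ i → i ≤ n * N →
              phi F i x (fun j : ℕ => η (j / N) ⟨j % N, Nat.mod_lt j hN⟩) ∈ interior Q),
            ∑ η ∈ S, ENNReal.ofReal
              (Real.exp (∑ k ∈ Finset.range n, ∑ i : Fin N, f (η k i)))))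
      = ((N : ℝ) : EReal) * Pinv F f Q := by
  obtain ⟨c, hc⟩ := ENNReal.exists_tendsto_inv_mul_log_of_submultiplicative
    (aInv_ne_top f hF hQ hinv) (aInv_add_le_mul f hF hQ hinv)
  simp only [iInf_blocks_eq_aInv F f Q hN]
  rw [(EReal.tendsto_inv_mul_comp_mul hc hN).limsup_eq, Pinv, hc.limsup_eq]
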